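/- arXiv:math/0209292 — 2 statements merged into one kernel-verified Lean document; each statement's English description precedes it below -/
import Mathlib

section
/- Let U be a free ultrafilter on ℕ and (A n) a sequence of unital complex C*-algebras. If u ∈ ∏_U A n is unitary (u* u = u u* = 1), then there exists a unitary w ∈ ℓ∞(A) (w* w = w w* = 1) with π(w) = u. -/
/-!
Lift `u` to any `x ∈ ℓ∞(A)`. Then `‖x n⋆ x n - 1‖` and `‖x n x n⋆ - 1‖` tend to `0` along `U`, so
for `U`-almost every `n` both `x n⋆ x n` and `x n x n⋆` are invertible and `x n` has the unitary
polar part `w n = x n (x n⋆ x n)^(-1/2)`, with `‖w n - x n‖ ≤ 2 ‖x‖ ‖x n⋆ x n - 1‖ → 0`; at the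
remaining `n` put `w n = 1`. Then `w` is a unitary of `ℓ∞(A)` with `π w = π x = u`.
-/

open Filter Topology ENNReal

noncomputable section

section UltraCStar

variable (U : Ultrafilter ℕ) (A : ℕ → Type*) [∀ n, CStarAlgebra (A n)] [∀ n, Nontrivial (A n)]

/-- The limit along the ultrafilter `U` of the sequence of norms of `x ∈ ℓ∞(A)`. -/
def ulim (x : lp A ∞) : ℝ := limUnder (U : Filter ℕ) fun n => ‖x n‖

variable {U A}

theorem exists_tendsto_norm (x : lp A ∞) :
    ∃ r : ℝ, Tendsto (fun n => ‖x n‖) (U : Filter ℕ) (𝓝 r) := by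
  obtain ⟨C, hC⟩ := (lp.memℓp x).bddAbove
  have h : (↑(U.map fun n => ‖x n‖) : Filter ℝ) ≤ 𝓟 (Set.Icc 0 C) := by
    rw [Ultrafilter.coe_map, le_principal_iff, mem_map]
    exact univ_mem' fun n => ⟨norm_nonneg _, hC ⟨n, rfl⟩⟩
  obtain ⟨r, -, hr⟩ := isCompact_Icc.ultrafilter_le_nhds (U.map fun n => ‖x n‖) h
  exact ⟨r, by rwa [Ultrafilter.coe_map] at hr⟩

theorem tendsto_ulim (x : lp A ∞) :
    Tendsto (fun n => ‖x n‖) (U : Filter ℕ) (𝓝 (ulim U A x)) :=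
  tendsto_nhds_limUnder (exists_tendsto_norm x)

theorem ulim_eq {x : lp A ∞} {r : ℝ}
    (h : Tendsto (fun n => ‖x n‖) (U : Filter ℕ) (𝓝 r)) : ulim U A x = r :=
  tendsto_nhds_unique (tendsto_ulim x) h

theorem ulim_zero : ulim U A 0 = 0 :=
  ulim_eq <| by
    have : ∀ n, ‖(0 : lp A ∞) n‖ = (0 : ℝ) := fun n => by simp
    simpa [this] using tendsto_const_nhds

theorem ulim_neg (x : lp A ∞) : ulim U A (-x) = ulim U A x :=
  ulim_eq <| (tendsto_ulim x).congr fun n => by simp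

theorem ulim_add_le (x y : lp A ∞) : ulim U A (x + y) ≤ ulim U A x + ulim U A y := by
  refine le_of_tendsto_of_tendsto' (tendsto_ulim (x + y))
    ((tendsto_ulim x).add (tendsto_ulim y)) fun n => ?_
  calc ‖(x + y) n‖ = ‖x n + y n‖ := by simp
    _ ≤ ‖x n‖ + ‖y n‖ := norm_add_le _ _

theorem ulim_mul_le (x y : lp A ∞) : ulim U A (x * y) ≤ ulim U A x * ulim U A y := by
  refine le_of_tendsto_of_tendsto' (tendsto_ulim (x * y))
    ((tendsto_ulim x).mul (tendsto_ulim y)) fun n => ?_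
  calc ‖(x * y) n‖ = ‖x n * y n‖ := by simp
    _ ≤ ‖x n‖ * ‖y n‖ := norm_mul_le _ _

theorem ulim_smul (c : ℂ) (x : lp A ∞) : ulim U A (c • x) = ‖c‖ * ulim U A x :=
  ulim_eq <| ((tendsto_ulim x).const_mul ‖c‖).congr fun n => by
    simp [norm_smul]

theorem ulim_star (x : lp A ∞) : ulim U A (star x) = ulim U A x :=
  ulim_eq <| (tendsto_ulim x).congr fun n => by
    simp [lp.coeFn_star]

variable (U A)

/-- The additive seminorm `x ↦ lim_U ‖x n‖` on `ℓ∞(A)`. -/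
def upAddSeminorm : AddGroupSeminorm (lp A ∞) where
  toFun := ulim U A
  map_zero' := ulim_zero
  add_le' := ulim_add_le
  neg' := ulim_neg

/-- Type synonym of `ℓ∞(A)` carrying the seminorm `x ↦ lim_U ‖x n‖`. -/
def PreUP (_U : Ultrafilter ℕ) (A : ℕ → Type*) [∀ n, CStarAlgebra (A n)] : Type _ := lp A ∞

/-- The identity map `ℓ∞(A) → PreUP U A`. -/
def toPre : lp A ∞ → PreUP U A := id

instance : Ring (PreUP U A) := (inferInstance : Ring (lp A ∞))

instance : StarRing (PreUP U A) := (inferInstance : StarRing (lp A ∞))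

instance : SeminormedRing (PreUP U A) :=
  { (upAddSeminorm U A).toSeminormedAddCommGroup,
    (inferInstance : Ring (lp A ∞)) with
    norm_mul_le := ulim_mul_le }

instance : NormedAlgebra ℂ (PreUP U A) :=
  { (inferInstance : Algebra ℂ (lp A ∞)) with
    norm_smul_le := fun c x => le_of_eq (ulim_smul c x) }

instance : NormedStarGroup (PreUP U A) := ⟨fun x => (ulim_star x).le⟩

/-- The ultraproduct `∏_U A n`, realized as the separation quotient of `ℓ∞(A)`
equipped with the seminorm `x ↦ lim_U ‖x n‖`. -/
abbrev UProd : Type _ := SeparationQuotient (PreUP U A)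

instance : Star (SeparationQuotient (PreUP U A)) where
  star := SeparationQuotient.lift
    (fun x : PreUP U A => SeparationQuotient.mk (star x)) fun x y h => by
      try dsimp only
      refine SeparationQuotient.mk_eq_mk.2 ?_
      rw [Metric.inseparable_iff, dist_eq_norm] at h ⊢
      rwa [← star_sub, norm_star]

theorem mk_star (x : PreUP U A) :
    (SeparationQuotient.mk (star x) : UProd U A) = star (SeparationQuotient.mk x) := rfl

instance : StarRing (SeparationQuotient (PreUP U A)) where
  star_involutive := by
    refine SeparationQuotient.surjective_mk.forall.2 fun x => ?_
    rw [← mk_star, ← mk_star, star_star]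
  star_mul := by
    intro a b
    obtain ⟨x, rfl⟩ := SeparationQuotient.surjective_mk a
    obtain ⟨y, rfl⟩ := SeparationQuotient.surjective_mk b
    rw [← SeparationQuotient.mk_mul, ← mk_star, ← mk_star, ← mk_star,
      ← SeparationQuotient.mk_mul, star_mul]
  star_add := by
    intro a b
    obtain ⟨x, rfl⟩ := SeparationQuotient.surjective_mk a
    obtain ⟨y, rfl⟩ := SeparationQuotient.surjective_mk b
    rw [← SeparationQuotient.mk_add, ← mk_star, ← mk_star, ← mk_star,
      ← SeparationQuotient.mk_add, star_add]

/-- The quotient map `π : ℓ∞(A) → ∏_U A n`. -/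
def uproj (x : lp A ∞) : UProd U A := SeparationQuotient.mk (toPre U A x)

variable {U A}

theorem uproj_add (x y : lp A ∞) : uproj U A (x + y) = uproj U A x + uproj U A y := rfl

theorem uproj_mul (x y : lp A ∞) : uproj U A (x * y) = uproj U A x * uproj U A y := rfl

theorem uproj_star (x : lp A ∞) : uproj U A (star x) = star (uproj U A x) := rfl

theorem uproj_one : uproj U A 1 = 1 := rfl

theorem norm_uproj (x : lp A ∞) : ‖uproj U A x‖ = ulim U A x := rfl

end UltraCStar

open CFC

theorem abs_rpow_neg_one_half_sub_one_le {t : ℝ} (ht : 1 / 4 ≤ t) :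
    |t ^ (-(1 / 2) : ℝ) - 1| ≤ 2 * |t - 1| := by
  obtain ⟨s, hs, rfl⟩ : ∃ s : ℝ, 1 / 2 ≤ s ∧ t = s ^ 2 :=
    ⟨√t, by rw [Real.le_sqrt' (by norm_num)]; linarith, (Real.sq_sqrt (by linarith)).symm⟩
  have hs₀ : 0 < s := by linarith
  rw [Real.rpow_neg (by positivity), ← Real.sqrt_eq_rpow, Real.sqrt_sq hs₀.le,
    show s⁻¹ - 1 = -(s - 1) / s by field_simp; ring, show s ^ 2 - 1 = (s - 1) * (s + 1) by ring,
    abs_div, _root_.abs_neg, abs_mul, abs_of_pos hs₀, abs_of_pos (by linarith : 0 < s + 1),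
    div_le_iff₀ hs₀]
  nlinarith [abs_nonneg (s - 1)]

theorem norm_sub_one_le_of_mem_spectrum {𝕜 B : Type*} [NormedField 𝕜] [NormedRing B]
    [NormedAlgebra 𝕜 B] [CompleteSpace B] [NormOneClass B] {b : B} {t : 𝕜}
    (ht : t ∈ spectrum 𝕜 b) : ‖t - 1‖ ≤ ‖b - 1‖ := by
  have : t - 1 ∈ spectrum 𝕜 (b - algebraMap 𝕜 B 1) := by
    rw [← spectrum.sub_singleton_eq]; exact Set.sub_mem_sub ht rfl
  simpa using spectrum.norm_le_norm_of_mem this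

theorem isUnit_of_norm_sub_one_lt_one {R : Type*} [NormedRing R] [HasSummableGeomSeries R]
    {x : R} (hx : ‖x - 1‖ < 1) : IsUnit x :=
  sub_sub_self (1 : R) x ▸ (Units.oneSub (1 - x) (by rwa [norm_sub_rev])).isUnit

section UnitaryPart

variable {B : Type*} [CStarAlgebra B] [PartialOrder B] [StarOrderedRing B]

def unitaryPart (x : B) : B := x * (star x * x) ^ (-(1 / 2) : ℝ)

theorem star_rpow_eq_self (a : B) (y : ℝ) : star (a ^ y) = a ^ y :=
  (rpow_nonneg (a := a) (y := y)).isSelfAdjoint.star_eq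

theorem star_unitaryPart_mul_self {x : B} (hx : IsUnit (star x * x)) :
    star (unitaryPart x) * unitaryPart x = 1 := by
  rw [unitaryPart, star_mul, star_rpow_eq_self, mul_assoc, ← mul_assoc (star x), ← mul_assoc,
    conjugate_rpow_neg_one_half _ (hx.isStrictlyPositive (star_mul_self_nonneg x))]

theorem unitaryPart_mul_star_self {x : B} (hx₁ : IsUnit (star x * x))
    (hx₂ : IsUnit (x * star x)) : unitaryPart x * star (unitaryPart x) = 1 := by
  have hinv : (star x * x) ^ (-(1 / 2) : ℝ) * (star x * x) ^ (-(1 / 2) : ℝ) * (star x * x) = 1 := by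
    nth_rw 3 [← rpow_one (star x * x)]
    rw [← rpow_add hx₁, ← rpow_add hx₁]
    norm_num
    exact rpow_zero _
  rw [← hx₂.mul_left_inj, one_mul]
  calc _ = x * ((star x * x) ^ (-(1 / 2) : ℝ) * (star x * x) ^ (-(1 / 2) : ℝ) * (star x * x))
        * star x := by simp only [unitaryPart, star_mul, star_rpow_eq_self, mul_assoc]
    _ = x * star x := by rw [hinv, mul_one]

theorem norm_rpow_neg_one_half_sub_one_le {b : B} (hb₀ : 0 ≤ b) (hb : ‖b - 1‖ ≤ 3 / 4) :
    ‖b ^ (-(1 / 2) : ℝ) - 1‖ ≤ 2 * ‖b - 1‖ := by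
  nontriviality B
  have hσ : ∀ t ∈ spectrum ℝ b, |t - 1| ≤ ‖b - 1‖ ∧ 1 / 4 ≤ t := fun t ht =>
    have htb : |t - 1| ≤ ‖b - 1‖ := norm_sub_one_le_of_mem_spectrum ht
    ⟨htb, by linarith [abs_le.1 (htb.trans hb)]⟩
  have hcont : ContinuousOn (fun t : ℝ => t ^ (-(1 / 2) : ℝ)) (spectrum ℝ b) :=
    continuousOn_id.rpow_const fun t ht => Or.inl (lt_of_lt_of_le (by norm_num) (hσ t ht).2).ne'
  have hcfc : b ^ (-(1 / 2) : ℝ) - 1 = cfc (fun t : ℝ => t ^ (-(1 / 2) : ℝ) - 1) b := by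
    rw [cfc_sub _ _ b hcont, cfc_const_one ℝ b, rpow_eq_cfc_real hb₀]
  rw [hcfc]
  refine norm_cfc_le (by positivity) fun t ht => ?_
  calc ‖t ^ (-(1 / 2) : ℝ) - 1‖ ≤ 2 * |t - 1| := abs_rpow_neg_one_half_sub_one_le (hσ t ht).2
    _ ≤ 2 * ‖b - 1‖ := by linarith [(hσ t ht).1]

theorem norm_unitaryPart_sub_le {x : B} (hx : ‖star x * x - 1‖ ≤ 3 / 4) :
    ‖unitaryPart x - x‖ ≤ 2 * ‖x‖ * ‖star x * x - 1‖ := by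
  calc ‖unitaryPart x - x‖ = ‖x * ((star x * x) ^ (-(1 / 2) : ℝ) - 1)‖ := by
        rw [unitaryPart, mul_sub, mul_one]
    _ ≤ ‖x‖ * (2 * ‖star x * x - 1‖) := norm_mul_le_of_le le_rfl
        (norm_rpow_neg_one_half_sub_one_le (star_mul_self_nonneg x) hx)
    _ = 2 * ‖x‖ * ‖star x * x - 1‖ := by ring

end UnitaryPart

theorem exists_mem_unitary_norm_sub_le {B : Type*} [CStarAlgebra B] {x : B}
    (h₁ : ‖star x * x - 1‖ ≤ 3 / 4) (h₂ : ‖x * star x - 1‖ < 1) :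
    ∃ w ∈ unitary B, ‖w - x‖ ≤ 2 * ‖x‖ * ‖star x * x - 1‖ := by
  let _ := CStarAlgebra.spectralOrder B
  have _ := CStarAlgebra.spectralOrderedRing B
  have hu₁ := isUnit_of_norm_sub_one_lt_one (h₁.trans_lt (by norm_num))
  have hu₂ := isUnit_of_norm_sub_one_lt_one h₂
  exact ⟨unitaryPart x, ⟨star_unitaryPart_mul_self hu₁, unitaryPart_mul_star_self hu₁ hu₂⟩,
    norm_unitaryPart_sub_le h₁⟩
theorem lp.mem_unitary_iff {ι : Type*} {B : ι → Type*} [∀ i, NormedRing (B i)]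
    [∀ i, NormOneClass (B i)] [∀ i, StarRing (B i)] [∀ i, NormedStarGroup (B i)] {w : lp B ∞} :
    w ∈ unitary (lp B ∞) ↔ ∀ i, w i ∈ unitary (B i) := by
  simp [Unitary.mem_iff, lp.ext_iff, funext_iff, lp.infty_coeFn_mul, lp.coeFn_star,
    lp.infty_coeFn_one, forall_and]

theorem lp.exists_mem_unitary_tendsto_norm_sub {ι : Type*} {l : Filter ι} {A : ι → Type*}
    [∀ i, CStarAlgebra (A i)] [∀ i, Nontrivial (A i)] (x : lp A ∞)
    (h₁ : Tendsto (fun i => ‖star (x i) * x i - 1‖) l (𝓝 0))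
    (h₂ : Tendsto (fun i => ‖x i * star (x i) - 1‖) l (𝓝 0)) :
    ∃ w ∈ unitary (lp A ∞), Tendsto (fun i => ‖w i - x i‖) l (𝓝 0) := by
  have hw : ∀ i, ∃ w ∈ unitary (A i), ‖star (x i) * x i - 1‖ ≤ 3 / 4 →
      ‖x i * star (x i) - 1‖ < 1 → ‖w - x i‖ ≤ 2 * ‖x i‖ * ‖star (x i) * x i - 1‖ := fun i => by
    by_cases hi : ‖star (x i) * x i - 1‖ ≤ 3 / 4 ∧ ‖x i * star (x i) - 1‖ < 1
    · obtain ⟨w, hw, hwx⟩ := exists_mem_unitary_norm_sub_le hi.1 hi.2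
      exact ⟨w, hw, fun _ _ => hwx⟩
    · exact ⟨1, one_mem _, fun h h' => absurd ⟨h, h'⟩ hi⟩
  choose w hwU hwx using hw
  have hmem : Memℓp w ∞ :=
    memℓp_infty ⟨1, Set.forall_mem_range.2 fun i => (CStarRing.norm_of_mem_unitary (hwU i)).le⟩
  refine ⟨⟨w, hmem⟩, lp.mem_unitary_iff.2 hwU, squeeze_zero' (.of_forall fun _ => norm_nonneg _)
    ?_ (by simpa using h₁.const_mul (2 * ‖x‖))⟩
  filter_upwards [h₁.eventually (eventually_le_nhds (by norm_num : (0 : ℝ) < 3 / 4)),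
    h₂.eventually (eventually_lt_nhds zero_lt_one)] with i hi₁ hi₂
  calc ‖w i - x i‖ ≤ 2 * ‖x i‖ * ‖star (x i) * x i - 1‖ := hwx i hi₁ hi₂
    _ ≤ 2 * ‖x‖ * ‖star (x i) * x i - 1‖ := by
      gcongr; exact lp.norm_apply_le_norm top_ne_zero x i

section Ultraproduct

variable {U : Ultrafilter ℕ} {A : ℕ → Type*} [∀ n, CStarAlgebra (A n)] [∀ n, Nontrivial (A n)]

theorem uproj_surjective : Function.Surjective (uproj U A) :=
  SeparationQuotient.surjective_mk (X := PreUP U A)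

theorem uproj_eq_uproj_iff {x y : lp A ∞} :
    uproj U A x = uproj U A y ↔ Tendsto (fun n => ‖x n - y n‖) U (𝓝 0) := by
  rw [uproj, uproj, SeparationQuotient.mk_eq_mk, Metric.inseparable_iff, dist_eq_norm]
  change ulim U A (x - y) = 0 ↔ _
  have h := tendsto_ulim (U := U) (x - y)
  simp only [lp.coeFn_sub, Pi.sub_apply] at h
  exact ⟨fun h0 => h0 ▸ h, fun h' => tendsto_nhds_unique h h'⟩

end Ultraproduct

theorem stmt3_general (U : Ultrafilter ℕ)
    (A : ℕ → Type*) [∀ n, CStarAlgebra (A n)] [∀ n, Nontrivial (A n)]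
    (u : UProd U A) (hu₁ : star u * u = 1) (hu₂ : u * star u = 1) :
    ∃ w : lp A ∞, star w * w = 1 ∧ w * star w = 1 ∧ uproj U A w = u := by
  obtain ⟨x, rfl⟩ := uproj_surjective u
  have h₁ : uproj U A (star x * x) = uproj U A 1 := hu₁
  have h₂ : uproj U A (x * star x) = uproj U A 1 := hu₂
  simp only [uproj_eq_uproj_iff, lp.infty_coeFn_mul, lp.coeFn_star, lp.infty_coeFn_one,
    Pi.mul_apply, Pi.star_apply, Pi.one_apply] at h₁ h₂
  obtain ⟨w, hw, hwx⟩ := lp.exists_mem_unitary_tendsto_norm_sub x h₁ h₂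
  exact ⟨w, hw.1, hw.2, uproj_eq_uproj_iff.2 hwx⟩

/-- unitaries lift from the ultraproduct to `ℓ∞(A)`. -/
theorem stmt3 (U : Ultrafilter ℕ) (hU : (U : Filter ℕ) ≤ Filter.cofinite)
    (A : ℕ → Type*) [∀ n, CStarAlgebra (A n)] [∀ n, Nontrivial (A n)]
    (u : UProd U A) (hu₁ : star u * u = 1) (hu₂ : u * star u = 1) :
    ∃ w : lp A ∞, star w * w = 1 ∧ w * star w = 1 ∧ uproj U A w = u :=
  stmt3_general U A u hu₁ hu₂
end
end

section
/- Let U be a free ultrafilter on ℕ, N : ℕ → ℕ with N n ≥ 1 for all n, and A n := M_{N n}(ℂ). Suppose {n ∈ ℕ : N n is prime} ∈ U and, for every k ∈ ℕ, {n ∈ ℕ : N n > k} ∈ U. Then for every m ≥ 2 there is no unital *-homomorphism from M_m(ℂ) into the ultraproduct ∏_U A n. -/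
/-!
A unital `*`-homomorphism `φ : M_m → ∏_U M_{N n}` sends the matrix units `e_{j0}` to classes
of bounded sequences `b_j`, and the projection `φ(e_{00})` lifts, by functional calculus in each
coordinate, to a sequence of projections `Q_n`. For `U`-most `n` the matrices `Q_n`, `b_j(n)`,
`b_j(n)^*` then satisfy the matrix-unit relations up to a small error, which makes
`x ↦ (Q_n b_j(n)^* x)_j` and `(y_j) ↦ ∑ j, b_j(n) y_j` injective linear maps between `ℂ^{N n}`
and `(range Q_n)^m`. Hence `N n = m · rank Q_n`, impossible for a prime `N n > m ≥ 2`.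
-/

open Filter Topology ENNReal

noncomputable section

open scoped Matrix.Norms.L2Operator in
noncomputable instance (k : ℕ) : CStarAlgebra (Matrix (Fin k) (Fin k) ℂ) where

open Module

namespace ContinuousLinearMap

variable {𝕜 E ι : Type*} [NontriviallyNormedField 𝕜] [NormedAddCommGroup E]
  [NormedSpace 𝕜 E] [Fintype ι] [DecidableEq ι]

theorem injective_of_norm_sub_one_lt_one {T : E →L[𝕜] E} (hT : ‖T - 1‖ < 1) :
    Function.Injective T := by
  refine (injective_iff_map_eq_zero T).2 fun x hx => norm_le_zero_iff.1 ?_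
  have : ‖x‖ ≤ ‖T - 1‖ * ‖x‖ := by
    simpa [hx] using (T - 1).le_opNorm x
  nlinarith [norm_nonneg x]

theorem eq_zero_of_sum_apply_eq_zero {Q : E →L[𝕜] E} {b c : ι → E →L[𝕜] E} {ε : ℝ}
    (hunit : ∀ i j, ‖Q * c i * b j * Q - if i = j then Q else 0‖ ≤ ε)
    (hε : Fintype.card ι * ε < 1) {y : ι → E} (hy : ∀ j, Q (y j) = y j)
    (hsum : ∑ j, b j (y j) = 0) : y = 0 := by
  rcases isEmpty_or_nonempty ι with hι | ⟨⟨i₀⟩⟩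
  · exact Subsingleton.elim _ _
  have hε₀ : 0 ≤ ε := (norm_nonneg _).trans (hunit i₀ i₀)
  have hcoord : ∀ i, -y i = ∑ j, (Q * c i * b j * Q - if i = j then Q else 0) (y j) := by
    intro i
    simp [apply_ite (fun T : E →L[𝕜] E => ⇑T), ite_apply, Finset.sum_sub_distrib, hy,
      ← map_sum, hsum]
  have hbound : ‖y‖ ≤ Fintype.card ι * ε * ‖y‖ := by
    refine (pi_norm_le_iff_of_nonneg (by positivity)).2 fun i => ?_
    calc ‖y i‖ = ‖∑ j, (Q * c i * b j * Q - if i = j then Q else 0) (y j)‖ := by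
          rw [← hcoord, norm_neg]
      _ ≤ ∑ j, ‖Q * c i * b j * Q - if i = j then Q else 0‖ * ‖y j‖ :=
          norm_sum_le_of_le _ fun j _ => le_opNorm _ _
      _ ≤ ∑ _j : ι, ε * ‖y‖ := by gcongr with j; exacts [hunit i j, norm_le_pi_norm y j]
      _ = Fintype.card ι * ε * ‖y‖ := by simp [mul_assoc]
  exact norm_le_zero_iff.1 (by nlinarith [norm_nonneg y])

variable [FiniteDimensional 𝕜 E]

theorem finrank_eq_card_mul_finrank_range {Q : E →L[𝕜] E} (hQ : IsIdempotentElem Q)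
    {b c : ι → E →L[𝕜] E} {ε : ℝ}
    (hunit : ∀ i j, ‖Q * c i * b j * Q - if i = j then Q else 0‖ ≤ ε)
    (hε : Fintype.card ι * ε < 1) (hsum : ‖∑ j, b j * Q * c j - 1‖ < 1) :
    finrank 𝕜 E = Fintype.card ι * finrank 𝕜 Q.range := by
  set R := Q.range
  let V : E →ₗ[𝕜] ι → R := LinearMap.pi fun j => (Q : E →ₗ[𝕜] E).rangeRestrict ∘ₗ c j
  let W : (ι → R) →ₗ[𝕜] E := ∑ j, (b j : E →ₗ[𝕜] E) ∘ₗ R.subtype ∘ₗ LinearMap.proj j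
  have hWV : ∀ x, W (V x) = (∑ j, b j * Q * c j) x := fun x => by simp [V, W]
  have hV : Function.Injective V := fun x x' h =>
    injective_of_norm_sub_one_lt_one hsum <| by rw [← hWV, ← hWV, h]
  have hW : Function.Injective W := by
    refine (injective_iff_map_eq_zero W).2 fun y hy => funext fun j => Subtype.ext ?_
    refine congrFun (eq_zero_of_sum_apply_eq_zero hunit hε (y := fun j => (y j : E))
      (fun j => (LinearMap.IsIdempotentElem.mem_range_iff
        (IsIdempotentElem.toLinearMap hQ)).1 (y j).2) (by rw [← hy]; simp [W])) j
  have hdim : finrank 𝕜 (ι → R) = Fintype.card ι * finrank 𝕜 R := by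
    simp [Module.finrank_pi_fintype]
  exact le_antisymm (hdim ▸ LinearMap.finrank_le_finrank_of_injective hV)
    (hdim ▸ LinearMap.finrank_le_finrank_of_injective hW)

end ContinuousLinearMap

section NearProjection

variable {A : Type*} [CStarAlgebra A]

theorem IsSelfAdjoint.exists_isStarProjection_norm_sub_le {a : A} (ha : IsSelfAdjoint a)
    (h : ‖a * a - a‖ ≤ 1 / 16) :
    ∃ p : A, IsStarProjection p ∧ ‖p - a‖ ≤ 2 * ‖a * a - a‖ := by
  set ε := ‖a * a - a‖
  -- the spectrum of `a` lies within `2ε` of `{0, 1}`, and `g` rounds it to that point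
  set g : ℝ → ℝ := fun t => min 1 (max 0 (2 * t - 1 / 2))
  have hspec : ∀ t ∈ spectrum ℝ a, |t * t - t| ≤ ε := fun t ht => by
    have := norm_apply_le_norm_cfc (fun t : ℝ => t * t - t) a ht
    rwa [cfc_sub _ _ a, cfc_mul _ _ a, cfc_id' ℝ a] at this
  have hg : ∀ t ∈ spectrum ℝ a, (g t = 0 ∨ g t = 1) ∧ |g t - t| ≤ 2 * ε := by
    intro t ht
    obtain ⟨hlo, hhi⟩ := abs_le.1 (hspec t ht)
    rcases le_or_gt t (1 / 4) with ht' | ht'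
    · have hgt : g t = 0 := by
        simp only [g]; rw [max_eq_left (by linarith), min_eq_right (by norm_num)]
      refine ⟨.inl hgt, abs_le.2 ⟨?_, ?_⟩⟩ <;> rw [hgt] <;> nlinarith
    · have ht'' : 3 / 4 ≤ t := by nlinarith
      have hgt : g t = 1 := by
        simp only [g]; rw [max_eq_right (by linarith), min_eq_left (by linarith)]
      refine ⟨.inr hgt, abs_le.2 ⟨?_, ?_⟩⟩ <;> rw [hgt] <;> nlinarith
  refine ⟨cfc g a, ⟨?_, cfc_predicate g a⟩, ?_⟩
  · show cfc g a * cfc g a = cfc g a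
    rw [← cfc_mul g g a]
    exact cfc_congr fun t ht => by rcases (hg t ht).1 with h | h <;> simp [h]
  · calc ‖cfc g a - a‖ = ‖cfc (fun t => g t - t) a‖ := by rw [cfc_sub _ _ a, cfc_id' ℝ a]
      _ ≤ 2 * ε := norm_cfc_le (by positivity) fun t ht => (hg t ht).2

end NearProjection

section Ultraproduct

variable {U : Ultrafilter ℕ} {A : ℕ → Type*} [∀ n, CStarAlgebra (A n)] [∀ n, Nontrivial (A n)]

variable (U A) in
def uprojStarAlgHom : lp A ∞ →⋆ₐ[ℂ] UProd U A where
  toFun := uproj U A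
  map_one' := uproj_one
  map_mul' := uproj_mul
  map_zero' := rfl
  map_add' := uproj_add
  commutes' _ := rfl
  map_star' := uproj_star

theorem uprojStarAlgHom_surjective : Function.Surjective (uprojStarAlgHom U A) := fun y => by
  obtain ⟨x, rfl⟩ := SeparationQuotient.surjective_mk (X := PreUP U A) y
  exact ⟨x, rfl⟩

theorem uprojStarAlgHom_eq_zero_iff {x : lp A ∞} :
    uprojStarAlgHom U A x = 0 ↔ Tendsto (fun n => ‖x n‖) U (𝓝 0) := by
  rw [← norm_eq_zero]
  exact ⟨fun h => h ▸ tendsto_ulim x, ulim_eq⟩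

theorem eventually_norm_sub_lt_of_uprojStarAlgHom_eq {x y : lp A ∞}
    (h : uprojStarAlgHom U A x = uprojStarAlgHom U A y) {ε : ℝ} (hε : 0 < ε) :
    ∀ᶠ n in U, ‖x n - y n‖ < ε := by
  rw [← sub_eq_zero, ← map_sub, uprojStarAlgHom_eq_zero_iff] at h
  simpa using h.eventually_lt_const hε

theorem IsStarProjection.exists_lift_uprojStarAlgHom {p : UProd U A} (hp : IsStarProjection p) :
    ∃ P : lp A ∞, (∀ n, IsStarProjection (P n)) ∧ uprojStarAlgHom U A P = p := by
  obtain ⟨x, hx⟩ := uprojStarAlgHom_surjective (U := U) p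
  set a := star x * x
  have ha : uprojStarAlgHom U A a = p := by
    rw [map_mul, map_star, hx, hp.isSelfAdjoint.star_eq, hp.isIdempotentElem.eq]
  have hδ : Tendsto (fun n => ‖a n * a n - a n‖) U (𝓝 0) := by
    have : uprojStarAlgHom U A (a * a - a) = 0 := by
      rw [map_sub, map_mul, ha, hp.isIdempotentElem.eq, sub_self]
    exact uprojStarAlgHom_eq_zero_iff.1 this
  have hsa : ∀ n, IsSelfAdjoint (a n) := fun n => IsSelfAdjoint.star_mul_self (x n)
  have hnear : ∀ n, ∃ P, IsStarProjection P ∧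
      (‖a n * a n - a n‖ ≤ 1 / 16 → ‖P - a n‖ ≤ 2 * ‖a n * a n - a n‖) := by
    intro n
    by_cases hn : ‖a n * a n - a n‖ ≤ 1 / 16
    · obtain ⟨P, hP, hPa⟩ := (hsa n).exists_isStarProjection_norm_sub_le hn
      exact ⟨P, hP, fun _ => hPa⟩
    · exact ⟨0, .zero _, fun h => absurd h hn⟩
  choose P hP hPa using hnear
  refine ⟨⟨P, memℓp_infty ⟨1, Set.forall_mem_range.2 fun n => (hP n).norm_le⟩⟩, hP, ?_⟩
  rw [← ha, ← sub_eq_zero, ← map_sub, uprojStarAlgHom_eq_zero_iff]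
  refine squeeze_zero' (.of_forall fun n => norm_nonneg _) ?_ (by simpa using hδ.const_mul 2)
  filter_upwards [hδ.eventually_le_const (by norm_num : (0 : ℝ) < 1 / 16)] with n hn
  exact hPa n hn

end Ultraproduct

theorem Matrix.card_dvd_of_norm_matrixUnit_sub_le {ι : Type*} [Fintype ι] [DecidableEq ι]
    {p : ℕ} {Q : Matrix (Fin p) (Fin p) ℂ} (hQ : IsIdempotentElem Q)
    {b c : ι → Matrix (Fin p) (Fin p) ℂ} {ε : ℝ}
    (hunit : ∀ i j, ‖Q * c i * b j * Q - if i = j then Q else 0‖ ≤ ε)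
    (hε : Fintype.card ι * ε < 1) (hsum : ‖∑ j, b j * Q * c j - 1‖ < 1) :
    Fintype.card ι ∣ p := by
  set Ψ := Matrix.toEuclideanCLM (𝕜 := ℂ) (n := Fin p)
  have hnorm : ∀ M, ‖Ψ M‖ = ‖M‖ := fun _ => rfl
  have h := ContinuousLinearMap.finrank_eq_card_mul_finrank_range (hQ.map Ψ)
    (b := fun j => Ψ (b j)) (c := fun j => Ψ (c j))
    (fun i j => by simpa [apply_ite Ψ] using (hnorm _).trans_le (hunit i j)) hε
    (by simpa using (hnorm _).trans_lt hsum)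
  rw [finrank_euclideanSpace, Fintype.card_fin] at h
  exact Dvd.intro _ h.symm

section MatrixAlgebraUltraproduct

variable {U : Ultrafilter ℕ} {N : ℕ → ℕ} [∀ n, Nontrivial (Matrix (Fin (N n)) (Fin (N n)) ℂ)]
  {m : ℕ} [NeZero m]

theorem exists_lift_matrixUnits
    (φ : Matrix (Fin m) (Fin m) ℂ →⋆ₐ[ℂ] UProd U fun n => Matrix (Fin (N n)) (Fin (N n)) ℂ) :
    ∃ (Q : lp (fun n => Matrix (Fin (N n)) (Fin (N n)) ℂ) ∞) (B : Fin m → lp _ ∞),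
      (∀ n, IsIdempotentElem (Q n)) ∧
      (∀ i j, uprojStarAlgHom U _ (Q * star (B i) * B j * Q) =
        uprojStarAlgHom U _ (if i = j then Q else 0)) ∧
      uprojStarAlgHom U _ (∑ j, B j * Q * star (B j)) = uprojStarAlgHom U _ 1 := by
  set π := uprojStarAlgHom U fun n => Matrix (Fin (N n)) (Fin (N n)) ℂ
  let e : Fin m → Fin m → Matrix (Fin m) (Fin m) ℂ := fun i j => Matrix.single i j 1
  have he_star : ∀ i j, star (e i j) = e j i := fun i j => by
    simp [e, Matrix.star_eq_conjTranspose]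
  have he_mul : ∀ i j k l, e i j * e k l = if j = k then e i l else 0 := fun i j k l => by
    split_ifs with h <;> simp [e, h]
  have he_unit : ∀ i j, e 0 0 * e 0 i * e j 0 * e 0 0 = if i = j then e 0 0 else 0 := by
    intro i j
    split_ifs with h <;> simp [he_mul, h]
  have he_sum : ∑ j, e j 0 * e 0 0 * e 0 j = 1 := by simp [he_mul, e, Matrix.sum_single_one]
  have he_proj : IsStarProjection (e 0 0) :=
    ⟨by rw [IsIdempotentElem, he_mul, if_pos rfl], he_star 0 0⟩
  obtain ⟨Q, hQ, hQe⟩ := (he_proj.map φ).exists_lift_uprojStarAlgHom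
  choose B hB using fun j => uprojStarAlgHom_surjective (φ (e j 0))
  have hBstar : ∀ j, π (star (B j)) = φ (e 0 j) := fun j => by
    rw [map_star, hB, ← map_star, he_star]
  refine ⟨Q, B, fun n => (hQ n).isIdempotentElem, fun i j => ?_, ?_⟩
  · rw [map_mul, map_mul, map_mul, hBstar, hB, hQe, ← map_mul φ, ← map_mul φ, ← map_mul φ,
      he_unit, apply_ite φ, apply_ite π, map_zero, map_zero, hQe]
  · rw [map_sum, map_one, ← map_one φ, ← he_sum, map_sum]
    refine Finset.sum_congr rfl fun j _ => ?_
    rw [map_mul, map_mul, hB, hQe, hBstar, ← map_mul φ, ← map_mul φ]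

theorem eventually_dvd_of_starAlgHom
    (φ : Matrix (Fin m) (Fin m) ℂ →⋆ₐ[ℂ] UProd U fun n => Matrix (Fin (N n)) (Fin (N n)) ℂ) :
    ∀ᶠ n in U, m ∣ N n := by
  obtain ⟨Q, B, hQ, hunit, hsum⟩ := exists_lift_matrixUnits φ
  have hε : (0 : ℝ) < 1 / (m + 1) := by positivity
  have hmε : (Fintype.card (Fin m) : ℝ) * (1 / (m + 1)) < 1 := by
    rw [Fintype.card_fin, mul_one_div, div_lt_one (by positivity)]
    linarith
  filter_upwards [eventually_all.2 fun i => eventually_all.2 fun j =>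
      eventually_norm_sub_lt_of_uprojStarAlgHom_eq (hunit i j) hε,
    eventually_norm_sub_lt_of_uprojStarAlgHom_eq hsum hε] with n hunit_n hsum_n
  have hsum_n' : ‖∑ j, B j n * Q n * star (B j n) - 1‖ < 1 := by
    have := hsum_n.trans_le (div_le_one_of_le₀ (by simp) (by positivity))
    rw [lp.coeFn_sum, Finset.sum_apply] at this
    simpa using this
  simpa using Matrix.card_dvd_of_norm_matrixUnit_sub_le (hQ n)
    (fun i j => by simpa [apply_ite (fun x : lp _ ∞ => x n)] using (hunit_n i j).le) hmε hsum_n'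

end MatrixAlgebraUltraproduct

/-- if `N n` is prime `U`-almost everywhere and `N n → ∞` along `U`, then
for `m ≥ 2` there is no unital `*`-homomorphism of `M_m(ℂ)` into the ultraproduct of the
`M_{N n}(ℂ)`. -/
theorem stmt12 (U : Ultrafilter ℕ)
    (N : ℕ → ℕ) (hN : ∀ n, 1 ≤ N n)
    (hprime : {n : ℕ | (N n).Prime} ∈ U)
    (hbig : ∀ k : ℕ, {n : ℕ | k < N n} ∈ U)
    (m : ℕ) (hm : 2 ≤ m) :
    haveI : ∀ n, Nontrivial (Matrix (Fin (N n)) (Fin (N n)) ℂ) := fun n =>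
      ⟨0, 1, fun h => by
        have := congrFun (congrFun h ⟨0, hN n⟩) ⟨0, hN n⟩
        simp [Matrix.one_apply] at this⟩
    ¬ Nonempty (Matrix (Fin m) (Fin m) ℂ →⋆ₐ[ℂ]
        UProd U fun n => Matrix (Fin (N n)) (Fin (N n)) ℂ) := by
  have hN₀ (n : ℕ) : NeZero (N n) := ⟨Nat.one_le_iff_ne_zero.1 (hN n)⟩
  have hm₀ : NeZero m := ⟨by omega⟩
  rintro ⟨φ⟩
  obtain ⟨n, hdvd, hprime_n, hbig_n⟩ :=
    ((eventually_dvd_of_starAlgHom φ).and (Filter.Eventually.and hprime (hbig m))).exists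
  rcases hprime_n.eq_one_or_self_of_dvd m hdvd with h | h <;> omega
end
end
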